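/- For fixed T > 0 and k ∈ ℝ, the function Δ ↦ Δ / K_T^Δ(k), where K_T^Δ(k) = √(k² + Δ²)/tanh(√(k² + Δ²)/(2T)), is strictly increasing in Δ on (0, ∞). -/
import Mathlib

/-- `K_T^Δ(k) = √(k² + Δ²)/tanh(√(k² + Δ²)/(2T))`. -/
noncomputable def KTDelta (T k Δ : ℝ) : ℝ :=
  Real.sqrt (k ^ 2 + Δ ^ 2) / Real.tanh (Real.sqrt (k ^ 2 + Δ ^ 2) / (2 * T))

lemma tanh_strictMono : StrictMono Real.tanh := by
  intro x y hxy
  rw [Real.tanh_eq_sinh_div_cosh, Real.tanh_eq_sinh_div_cosh,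
    div_lt_div_iff₀ (Real.cosh_pos x) (Real.cosh_pos y)]
  have h : Real.sinh (x - y) < 0 := by
    rw [Real.sinh_neg_iff]; linarith
  rw [Real.sinh_sub] at h
  linarith

lemma tanh_pos {x : ℝ} (hx : 0 < x) : 0 < Real.tanh x := by
  simpa using tanh_strictMono hx

/-- For fixed `T > 0` and `k ∈ ℝ`, the function `Δ ↦ Δ / K_T^Δ(k)` is strictly
increasing in `Δ` on `(0, ∞)`. -/
theorem deltaOverK_strictMono (T k : ℝ) (hT : 0 < T) :
    StrictMonoOn (fun Δ : ℝ => Δ / KTDelta T k Δ) (Set.Ioi (0 : ℝ)) := by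
  intro a ha b hb hab
  simp only [Set.mem_Ioi] at ha hb
  set Ea := Real.sqrt (k ^ 2 + a ^ 2) with hEa
  set Eb := Real.sqrt (k ^ 2 + b ^ 2) with hEb
  have hEa0 : 0 < Ea := Real.sqrt_pos.mpr (by positivity)
  have hEb0 : 0 < Eb := Real.sqrt_pos.mpr (by positivity)
  have hEab : Ea < Eb := by
    apply Real.sqrt_lt_sqrt (by positivity)
    nlinarith
  have hta : 0 < Real.tanh (Ea / (2 * T)) := tanh_pos (by positivity)
  have htb : 0 < Real.tanh (Eb / (2 * T)) := tanh_pos (by positivity)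
  have htab : Real.tanh (Ea / (2 * T)) < Real.tanh (Eb / (2 * T)) :=
    tanh_strictMono (by gcongr)
  have hfrac : a * Eb ≤ b * Ea := by
    have h1 : a * Eb = Real.sqrt (a ^ 2 * (k ^ 2 + b ^ 2)) := by
      rw [Real.sqrt_mul (by positivity), Real.sqrt_sq ha.le]
    have h2 : b * Ea = Real.sqrt (b ^ 2 * (k ^ 2 + a ^ 2)) := by
      rw [Real.sqrt_mul (by positivity), Real.sqrt_sq hb.le]
    rw [h1, h2]
    apply Real.sqrt_le_sqrt
    nlinarith [mul_nonneg (sq_nonneg k) (sub_nonneg.mpr ((by nlinarith : a ^ 2 ≤ b ^ 2)))]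
  show a / KTDelta T k a < b / KTDelta T k b
  unfold KTDelta
  rw [← hEa, ← hEb, div_div_eq_mul_div, div_div_eq_mul_div,
    div_lt_div_iff₀ hEa0 hEb0]
  nlinarith [mul_pos ha hEb0, mul_pos htb hEb0, mul_lt_mul_of_pos_left htab (mul_pos ha hEb0),
    mul_le_mul_of_nonneg_left hfrac htb.le]
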